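/- Consider a triple of generators (v_{ij}, v_{ki}, v_{pi}) of kQ̄_n with j, k, p ≠ i and j ≠ k, p (so that S = {i,k,p} ∩ {j,i,i} = {i}). Then the quasi-Poisson property {{v_{ij},v_{ki},v_{pi}}} = {{v_{ij},v_{ki},v_{pi}}}_qP holds if and only if both of the following conditions are satisfied: ν^{(i)}_{pj} [ α^{(i)}_{kp} + μ^{(i)}_{kj} + δ_{kp} β^{(k)}_{ij} ] = 0 and α^{(i)}_{kp} μ^{(i)}_{kj} − α^{(i)}_{kp} μ^{(i)}_{pj} − μ^{(i)}_{pj} μ^{(i)}_{kj} = −1/4. -/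

import Mathlib

open TensorProduct

namespace NCQP

variable (𝕜 : Type) [Field 𝕜] [CharZero 𝕜]

/-- A double bracket on a `𝕜`-algebra `A`: a bilinear map `A × A → A ⊗ A` satisfying
cyclic antisymmetry and the Leibniz rule in its second argument (for the outer bimodule
structure on `A ⊗ A`). -/
structure DoubleBracket (A : Type) [Ring A] [Algebra 𝕜 A] where
  br : A →ₗ[𝕜] A →ₗ[𝕜] A ⊗[𝕜] A
  cyclic : ∀ a b : A, br b a = - (TensorProduct.comm 𝕜 A A) (br a b)
  leibniz : ∀ a b c : A,
    br a (b * c) = br a b * ((1 : A) ⊗ₜ[𝕜] c) + ((b : A) ⊗ₜ[𝕜] (1 : A)) * br a c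

variable {𝕜}
variable {A : Type} [Ring A] [Algebra 𝕜 A]

/-- The permutation `τ_(132)` on `A ⊗ A ⊗ A`, sending `a ⊗ b ⊗ c` to `b ⊗ c ⊗ a`. -/
noncomputable def tau132 (𝕜 : Type) [Field 𝕜] (A : Type) [Ring A] [Algebra 𝕜 A] :
    (A ⊗[𝕜] (A ⊗[𝕜] A)) ≃ₗ[𝕜] (A ⊗[𝕜] (A ⊗[𝕜] A)) :=
  (TensorProduct.comm 𝕜 A (A ⊗[𝕜] A)).trans (TensorProduct.assoc 𝕜 A A A)

/-- The permutation `τ_(123)` on `A ⊗ A ⊗ A`, sending `a ⊗ b ⊗ c` to `c ⊗ a ⊗ b`. -/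
noncomputable def tau123 (𝕜 : Type) [Field 𝕜] (A : Type) [Ring A] [Algebra 𝕜 A] :
    (A ⊗[𝕜] (A ⊗[𝕜] A)) ≃ₗ[𝕜] (A ⊗[𝕜] (A ⊗[𝕜] A)) :=
  (tau132 𝕜 A).trans (tau132 𝕜 A)

/-- Extension of a linear map `φ : A → A ⊗ A` to `A ⊗ A → A ⊗ A ⊗ A` acting on the
left factor: `b ⊗ c ↦ φ(b) ⊗ c`. -/
noncomputable def extL (𝕜 : Type) [Field 𝕜] (A : Type) [Ring A] [Algebra 𝕜 A]
    (φ : A →ₗ[𝕜] A ⊗[𝕜] A) : A ⊗[𝕜] A →ₗ[𝕜] A ⊗[𝕜] (A ⊗[𝕜] A) :=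
  (TensorProduct.assoc 𝕜 A A A).toLinearMap.comp (LinearMap.rTensor A φ)

/-- The triple bracket `{{a,b,c}}` associated with a double bracket. -/
noncomputable def tripleBr (D : DoubleBracket 𝕜 A) (a b c : A) : A ⊗[𝕜] (A ⊗[𝕜] A) :=
  extL 𝕜 A (D.br a) (D.br b c) + tau123 𝕜 A (extL 𝕜 A (D.br b) (D.br c a))
    + tau132 𝕜 A (extL 𝕜 A (D.br c) (D.br a b))

/-- The quasi-Poisson trivector term `{{a,b,c}}_qP` associated with a family of
orthogonal idempotents `e`. -/
noncomputable def tripleQP {I : Type} [Fintype I] (e : I → A) (a b c : A) :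
    A ⊗[𝕜] (A ⊗[𝕜] A) :=
  (4 : 𝕜)⁻¹ • ∑ s : I,
    ( (c * e s * a) ⊗ₜ[𝕜] ((e s * b) ⊗ₜ[𝕜] (e s))
    - (c * e s * a) ⊗ₜ[𝕜] ((e s) ⊗ₜ[𝕜] (b * e s))
    - (c * e s) ⊗ₜ[𝕜] ((a * e s * b) ⊗ₜ[𝕜] (e s))
    + (c * e s) ⊗ₜ[𝕜] ((a * e s) ⊗ₜ[𝕜] (b * e s))
    - (e s * a) ⊗ₜ[𝕜] ((e s * b) ⊗ₜ[𝕜] (e s * c))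
    + (e s * a) ⊗ₜ[𝕜] ((e s) ⊗ₜ[𝕜] (b * e s * c))
    + (e s) ⊗ₜ[𝕜] ((a * e s * b) ⊗ₜ[𝕜] (e s * c))
    - (e s) ⊗ₜ[𝕜] ((a * e s) ⊗ₜ[𝕜] (b * e s * c)) )

variable (𝕜)

/-- Generators of the path algebra of the quiver `Q̄_n`: one idempotent `E i` per vertex
and one arrow `V i j : j → i` for each ordered pair of distinct vertices. -/
inductive QGen (n : ℕ) : Type
  | E : Fin n → QGen n
  | V : Fin n → Fin n → QGen n

/-- The defining relations of the path algebra of `Q̄_n`. -/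
inductive QRel (n : ℕ) : FreeAlgebra 𝕜 (QGen n) → FreeAlgebra 𝕜 (QGen n) → Prop
  | orth (i j : Fin n) :
      QRel n (FreeAlgebra.ι 𝕜 (QGen.E i) * FreeAlgebra.ι 𝕜 (QGen.E j))
        (if i = j then FreeAlgebra.ι 𝕜 (QGen.E i) else 0)
  | sum_one :
      QRel n (∑ i : Fin n, FreeAlgebra.ι 𝕜 (QGen.E i)) 1
  | supp (i j : Fin n) :
      QRel n (FreeAlgebra.ι 𝕜 (QGen.V i j))
        (FreeAlgebra.ι 𝕜 (QGen.E i) * FreeAlgebra.ι 𝕜 (QGen.V i j) *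
          FreeAlgebra.ι 𝕜 (QGen.E j))
  | diag (i : Fin n) :
      QRel n (FreeAlgebra.ι 𝕜 (QGen.V i i)) 0

/-- The path algebra `𝕜 Q̄_n` of the double of an ordering of the complete `n`-partite
graph on `n` vertices. -/
abbrev PathAlg (n : ℕ) : Type := RingQuot (QRel 𝕜 n)

/-- The vertex idempotents `e i` of `𝕜 Q̄_n`. -/
noncomputable def pe (n : ℕ) (i : Fin n) : PathAlg 𝕜 n :=
  RingQuot.mkAlgHom 𝕜 (QRel 𝕜 n) (FreeAlgebra.ι 𝕜 (QGen.E i))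

/-- The arrows `v i j : j → i` of `𝕜 Q̄_n`. -/
noncomputable def pv (n : ℕ) (i j : Fin n) : PathAlg 𝕜 n :=
  RingQuot.mkAlgHom 𝕜 (QRel 𝕜 n) (FreeAlgebra.ι 𝕜 (QGen.V i j))

/-- The data of coefficient matrices `α, β, μ, ν` and scalars `κ`, together with a
`B`-linear double bracket on the path algebra `𝕜 Q̄_n` whose values on the generators
are given by the formulas (vv0)–(vvopp); `α s i j` stands for `α^{(s)}_{ij}` and
`κ i a j` stands for `κ_a^{(i,j)}`. -/
structure BracketData (n : ℕ) where
  α : Fin n → Fin n → Fin n → 𝕜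
  β : Fin n → Fin n → Fin n → 𝕜
  μ : Fin n → Fin n → Fin n → 𝕜
  ν : Fin n → Fin n → Fin n → 𝕜
  κ : Fin n → Fin n → Fin n → 𝕜
  D : DoubleBracket 𝕜 (PathAlg 𝕜 n)
  hα_skew : ∀ s i j, α s i j = - α s j i
  hα_row : ∀ s j, α s s j = 0
  hα_col : ∀ s j, α s j s = 0
  hβ_skew : ∀ s i j, β s i j = - β s j i
  hβ_row : ∀ s j, β s s j = 0
  hβ_col : ∀ s j, β s j s = 0
  hμ_diag : ∀ s i, μ s i i = 0
  hμ_row : ∀ s j, μ s s j = 0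
  hμ_col : ∀ s j, μ s j s = 0
  hν_diag : ∀ s i, ν s i i = 0
  hν_row : ∀ s j, ν s s j = 0
  hν_col : ∀ s j, ν s j s = 0
  hκ : ∀ i a j, ¬ (j < a ∧ a < i) → κ i a j = 0
  /-- the bracket vanishes on the idempotents, i.e. it is `B`-linear -/
  hB : ∀ s, D.br (pe 𝕜 n s) = 0
  hvv : ∀ i j, D.br (pv 𝕜 n i j) (pv 𝕜 n i j) = 0
  hdisj : ∀ i j p q, i ≠ p → i ≠ q → j ≠ p → j ≠ q →
    D.br (pv 𝕜 n i j) (pv 𝕜 n p q) = 0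
  hbr_α : ∀ i j l, i ≠ j → l ≠ j →
    D.br (pv 𝕜 n i j) (pv 𝕜 n l j) = α j i l • (pv 𝕜 n l j ⊗ₜ[𝕜] pv 𝕜 n i j)
  hbr_β : ∀ i j l, j ≠ i → l ≠ i →
    D.br (pv 𝕜 n i j) (pv 𝕜 n i l) = β i j l • (pv 𝕜 n i j ⊗ₜ[𝕜] pv 𝕜 n i l)
  hbr_μν : ∀ i j l, i ≠ j → l ≠ j → i ≠ l →
    D.br (pv 𝕜 n i j) (pv 𝕜 n j l) =
      μ j i l • (pe 𝕜 n j ⊗ₜ[𝕜] (pv 𝕜 n i j * pv 𝕜 n j l))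
      + ν j i l • (pe 𝕜 n j ⊗ₜ[𝕜] pv 𝕜 n i l)
  hbr_μν' : ∀ i j l, i ≠ j → l ≠ i → l ≠ j →
    D.br (pv 𝕜 n i j) (pv 𝕜 n l i) =
      - (μ i l j • ((pv 𝕜 n l i * pv 𝕜 n i j) ⊗ₜ[𝕜] pe 𝕜 n i))
      - ν i l j • (pv 𝕜 n l j ⊗ₜ[𝕜] pe 𝕜 n i)
  hbr_loop : ∀ i j, i ≠ j →
    D.br (pv 𝕜 n i j) (pv 𝕜 n j i) =
      (if j < i then (1 : 𝕜) else -1) •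
        ( pe 𝕜 n j ⊗ₜ[𝕜] pe 𝕜 n i
          + (2 : 𝕜)⁻¹ • ((pv 𝕜 n j i * pv 𝕜 n i j) ⊗ₜ[𝕜] pe 𝕜 n i)
          + (2 : 𝕜)⁻¹ • (pe 𝕜 n j ⊗ₜ[𝕜] (pv 𝕜 n i j * pv 𝕜 n j i)) )
      + ∑ a : Fin n, κ i a j • (pe 𝕜 n j ⊗ₜ[𝕜] (pv 𝕜 n i a * pv 𝕜 n a i))
      - ∑ b : Fin n, κ j b i • ((pv 𝕜 n j b * pv 𝕜 n b j) ⊗ₜ[𝕜] pe 𝕜 n i)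



set_option linter.unusedSectionVars false

section Aux

variable {𝕜 : Type} [Field 𝕜] [CharZero 𝕜] {n : ℕ}

lemma pe_mul_pe (s t : Fin n) :
    pe 𝕜 n s * pe 𝕜 n t = if s = t then pe 𝕜 n s else 0 := by
  have h := RingQuot.mkAlgHom_rel 𝕜 (QRel.orth (𝕜 := 𝕜) (n := n) s t)
  simpa [pe, map_mul, apply_ite (RingQuot.mkAlgHom 𝕜 (QRel 𝕜 n))] using h

lemma pv_supp (i j : Fin n) :
    pv 𝕜 n i j = pe 𝕜 n i * pv 𝕜 n i j * pe 𝕜 n j := by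
  simpa [pe, pv, map_mul] using RingQuot.mkAlgHom_rel 𝕜 (QRel.supp (𝕜 := 𝕜) (n := n) i j)

lemma pe_mul_pv (s i j : Fin n) :
    pe 𝕜 n s * pv 𝕜 n i j = if s = i then pv 𝕜 n i j else 0 := by
  conv_lhs => rw [pv_supp i j]
  rw [← mul_assoc, ← mul_assoc, pe_mul_pe]
  split_ifs with h
  · subst h; rw [← pv_supp]
  · simp

lemma pv_mul_pe (i j s : Fin n) :
    pv 𝕜 n i j * pe 𝕜 n s = if s = j then pv 𝕜 n i j else 0 := by
  conv_lhs => rw [pv_supp i j]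
  rw [mul_assoc, mul_assoc, pe_mul_pe]
  by_cases h : s = j
  · subst h; rw [if_pos rfl, if_pos rfl, ← mul_assoc, ← pv_supp]
  · rw [if_neg (fun hh => h hh.symm), if_neg h, mul_zero, mul_zero]

lemma pv_mul_pv (i j k l : Fin n) (h : j ≠ k) :
    pv 𝕜 n i j * pv 𝕜 n k l = 0 := by
  have h1 : pe 𝕜 n k * pv 𝕜 n k l = pv 𝕜 n k l := by rw [pe_mul_pv, if_pos rfl]
  rw [← h1, ← mul_assoc, pv_mul_pe, if_neg (fun hh => h hh.symm), zero_mul]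

end Aux

section Model

open Matrix MvPolynomial

variable (𝕜 : Type) [Field 𝕜] [CharZero 𝕜] (n : ℕ)

/-- Target polynomial coefficient ring for the faithful model. -/
abbrev PolyR : Type := MvPolynomial (Fin n × Fin n) 𝕜

/-- Images of the generators in the matrix model. -/
noncomputable def modelF : QGen n → Matrix (Fin n) (Fin n) (PolyR 𝕜 n)
  | QGen.E i => Matrix.single i i 1
  | QGen.V i j => Matrix.single i j (if i = j then 0 else X (i, j))

lemma sum_stdBasisMatrix_diag :
    (∑ i : Fin n, Matrix.single i i (1 : PolyR 𝕜 n)) = 1 := by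
  ext a b
  rw [Matrix.sum_apply]
  by_cases h : a = b
  · subst h; simp [Matrix.single, Matrix.one_apply]
  · rw [Finset.sum_eq_zero, Matrix.one_apply_ne h]
    intro x _
    simp only [Matrix.single, Matrix.of_apply, ite_eq_right_iff, and_imp]
    rintro rfl rfl; exact (h rfl).elim

lemma modelF_E (i : Fin n) : modelF 𝕜 n (QGen.E i) = Matrix.single i i 1 := rfl

lemma modelF_V (i j : Fin n) :
    modelF 𝕜 n (QGen.V i j) = Matrix.single i j (if i = j then 0 else X (i, j)) := rfl

lemma modelRel : ∀ ⦃x y⦄, QRel 𝕜 n x y →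
    (FreeAlgebra.lift 𝕜 (modelF 𝕜 n)) x = (FreeAlgebra.lift 𝕜 (modelF 𝕜 n)) y := by
  intro x y h
  induction h with
  | orth i j =>
      simp only [_root_.map_mul, FreeAlgebra.lift_ι_apply, modelF_E,
        apply_ite (FreeAlgebra.lift 𝕜 (modelF 𝕜 n)), map_zero]
      by_cases hij : i = j
      · subst hij; rw [if_pos rfl, Matrix.single_mul_single_same, one_mul]
      · rw [if_neg hij]; exact Matrix.single_mul_single_of_ne _ _ _ _ hij _
  | sum_one =>
      simp only [map_sum, FreeAlgebra.lift_ι_apply, modelF_E, _root_.map_one]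
      exact sum_stdBasisMatrix_diag 𝕜 n
  | supp i j =>
      simp only [_root_.map_mul, FreeAlgebra.lift_ι_apply, modelF_E, modelF_V]
      rw [Matrix.single_mul_single_same, Matrix.single_mul_single_same, one_mul, mul_one]
  | diag i =>
      simp only [FreeAlgebra.lift_ι_apply, modelF_V, if_pos rfl, map_zero]
      exact Matrix.single_zero i i

/-- The faithful matrix model of the path algebra. -/
noncomputable def modelHom : PathAlg 𝕜 n →ₐ[𝕜] Matrix (Fin n) (Fin n) (PolyR 𝕜 n) :=
  RingQuot.liftAlgHom 𝕜 ⟨FreeAlgebra.lift 𝕜 (modelF 𝕜 n), modelRel 𝕜 n⟩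

lemma modelHom_pe (i : Fin n) :
    modelHom 𝕜 n (pe 𝕜 n i) = Matrix.single i i 1 := by
  rw [pe, modelHom, RingQuot.liftAlgHom_mkAlgHom_apply, FreeAlgebra.lift_ι_apply, modelF_E]

lemma modelHom_pv (i j : Fin n) (h : i ≠ j) :
    modelHom 𝕜 n (pv 𝕜 n i j) = Matrix.single i j (X (i, j)) := by
  rw [pv, modelHom, RingQuot.liftAlgHom_mkAlgHom_apply, FreeAlgebra.lift_ι_apply]
  rw [modelF_V, if_neg h]

/-- Linear functional: matrix entry `(a, b)` followed by coefficient of monomial `d`. -/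
noncomputable def entryCoeff (a b : Fin n) (d : (Fin n × Fin n) →₀ ℕ) :
    PathAlg 𝕜 n →ₗ[𝕜] 𝕜 :=
  ((MvPolynomial.lcoeff 𝕜 d).comp
    ({ toFun := fun M : Matrix (Fin n) (Fin n) (PolyR 𝕜 n) => M a b,
       map_add' := fun _ _ => rfl,
       map_smul' := fun _ _ => rfl } : Matrix (Fin n) (Fin n) (PolyR 𝕜 n) →ₗ[𝕜] PolyR 𝕜 n)).comp
    (modelHom 𝕜 n).toLinearMap

end Model

section Functionals

open Matrix MvPolynomial

variable {𝕜 : Type} [Field 𝕜] [CharZero 𝕜] {n : ℕ}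

/-- Evaluation of a triple of linear functionals on `A ⊗ (A ⊗ A)`. -/
noncomputable def triFun {A : Type} [Ring A] [Algebra 𝕜 A] (L1 L2 L3 : A →ₗ[𝕜] 𝕜) :
    A ⊗[𝕜] (A ⊗[𝕜] A) →ₗ[𝕜] 𝕜 :=
  TensorProduct.lift (((LinearMap.mul 𝕜 𝕜).comp L1).compl₂
    (TensorProduct.lift (((LinearMap.mul 𝕜 𝕜).comp L2).compl₂ L3)))

@[simp] lemma triFun_tmul {A : Type} [Ring A] [Algebra 𝕜 A] (L1 L2 L3 : A →ₗ[𝕜] 𝕜)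
    (a b c : A) : triFun L1 L2 L3 (a ⊗ₜ[𝕜] (b ⊗ₜ[𝕜] c)) = L1 a * (L2 b * L3 c) := by
  simp [triFun]

lemma entryCoeff_apply (a b : Fin n) (d : (Fin n × Fin n) →₀ ℕ) (x : PathAlg 𝕜 n) :
    entryCoeff 𝕜 n a b d x = coeff d (modelHom 𝕜 n x a b) := rfl

variable {i j m p : Fin n}

lemma ec_pe_one : entryCoeff 𝕜 n i i 0 (pe 𝕜 n i) = 1 := by
  rw [entryCoeff_apply, modelHom_pe, Matrix.single_apply_same]
  simp

lemma ec_pv_one (hmi : m ≠ i) :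
    entryCoeff 𝕜 n m i (Finsupp.single (m, i) 1) (pv 𝕜 n m i) = 1 := by
  rw [entryCoeff_apply, modelHom_pv 𝕜 n m i hmi, Matrix.single_apply_same]
  exact coeff_X_same (m, i)

lemma ec_len2 (hpi : p ≠ i) (hij : i ≠ j) :
    modelHom 𝕜 n (pv 𝕜 n p i * pv 𝕜 n i j)
      = Matrix.single p j (monomial (Finsupp.single (p, i) 1 + Finsupp.single (i, j) 1) 1) := by
  rw [_root_.map_mul, modelHom_pv 𝕜 n p i hpi, modelHom_pv 𝕜 n i j hij,
    Matrix.single_mul_single_same, X, X, monomial_mul, one_mul]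

lemma single_ne_pair (hpi : p ≠ i) :
    (Finsupp.single ((p : Fin n), j) 1 : (Fin n × Fin n) →₀ ℕ)
      ≠ Finsupp.single (p, i) 1 + Finsupp.single (i, j) 1 := by
  intro h
  have h2 := DFunLike.congr_fun h (i, j)
  simp [Finsupp.single_apply, Prod.ext_iff, hpi] at h2

lemma ec_T1_a (hpi : p ≠ i) (hij : i ≠ j) :
    entryCoeff 𝕜 n p j (Finsupp.single (p, i) 1 + Finsupp.single (i, j) 1)
      (pv 𝕜 n p i * pv 𝕜 n i j) = 1 := by
  rw [entryCoeff_apply, ec_len2 hpi hij, Matrix.single_apply_same, coeff_monomial, if_pos rfl]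

lemma ec_T2_a (hpi : p ≠ i) (hpj : p ≠ j) :
    entryCoeff 𝕜 n p j (Finsupp.single (p, i) 1 + Finsupp.single (i, j) 1)
      (pv 𝕜 n p j) = 0 := by
  rw [entryCoeff_apply, modelHom_pv 𝕜 n p j hpj, Matrix.single_apply_same, X,
    coeff_monomial, if_neg (single_ne_pair hpi)]

lemma ec_T1_b (hpi : p ≠ i) (hij : i ≠ j) :
    entryCoeff 𝕜 n p j (Finsupp.single (p, j) 1) (pv 𝕜 n p i * pv 𝕜 n i j) = 0 := by
  rw [entryCoeff_apply, ec_len2 hpi hij, Matrix.single_apply_same, coeff_monomial,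
    if_neg (fun h => single_ne_pair hpi h.symm)]

lemma ec_T2_b (hpj : p ≠ j) :
    entryCoeff 𝕜 n p j (Finsupp.single (p, j) 1) (pv 𝕜 n p j) = 1 := by
  rw [entryCoeff_apply, modelHom_pv 𝕜 n p j hpj, Matrix.single_apply_same]
  exact coeff_X_same (p, j)

end Functionals

section TripleLemmas

variable {𝕜 : Type} [Field 𝕜] [CharZero 𝕜] {A : Type} [Ring A] [Algebra 𝕜 A]

@[simp] lemma tau132_tmul (a b c : A) :
    tau132 𝕜 A (a ⊗ₜ[𝕜] (b ⊗ₜ[𝕜] c)) = b ⊗ₜ[𝕜] (c ⊗ₜ[𝕜] a) := by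
  simp [tau132]

@[simp] lemma tau123_tmul (a b c : A) :
    tau123 𝕜 A (a ⊗ₜ[𝕜] (b ⊗ₜ[𝕜] c)) = c ⊗ₜ[𝕜] (a ⊗ₜ[𝕜] b) := by
  simp [tau123]

@[simp] lemma extL_tmul (φ : A →ₗ[𝕜] A ⊗[𝕜] A) (x y : A) :
    extL 𝕜 A φ (x ⊗ₜ[𝕜] y) = (TensorProduct.assoc 𝕜 A A A) (φ x ⊗ₜ[𝕜] y) := by
  simp [extL]

end TripleLemmas

set_option maxHeartbeats 1000000 in
set_option synthInstance.maxHeartbeats 400000 in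
/-- Case 2.2, Lemma 5.4. For a triple `(v_{ij}, v_{ki}, v_{pi})` with
`S = {i}`, the quasi-Poisson property holds iff the two stated conditions hold.
Here `m` plays the role of the index `k`. -/
theorem statement_11 {𝕜 : Type} [Field 𝕜] [CharZero 𝕜] {n : ℕ}
    (S : BracketData 𝕜 n) (i j m p : Fin n)
    (hji : j ≠ i) (hmi : m ≠ i) (hpi : p ≠ i) (hjm : j ≠ m) (hjp : j ≠ p) :
    tripleBr S.D (pv 𝕜 n i j) (pv 𝕜 n m i) (pv 𝕜 n p i)
        = tripleQP (pe 𝕜 n) (pv 𝕜 n i j) (pv 𝕜 n m i) (pv 𝕜 n p i)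
      ↔ (S.ν i p j * (S.α i m p + S.μ i m j + (if m = p then (1 : 𝕜) else 0) * S.β m i j)
            = 0)
        ∧ (S.α i m p * S.μ i m j - S.α i m p * S.μ i p j - S.μ i p j * S.μ i m j
            = -(4 : 𝕜)⁻¹) := by
  have hij : i ≠ j := hji.symm
  have him : i ≠ m := hmi.symm
  have hip : i ≠ p := hpi.symm
  have hmj : m ≠ j := hjm.symm
  have hpj : p ≠ j := hjp.symm
  set T1 : PathAlg 𝕜 n ⊗[𝕜] (PathAlg 𝕜 n ⊗[𝕜] PathAlg 𝕜 n) :=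
    (pv 𝕜 n p i * pv 𝕜 n i j) ⊗ₜ[𝕜] (pe 𝕜 n i ⊗ₜ[𝕜] pv 𝕜 n m i) with hT1
  set T2 : PathAlg 𝕜 n ⊗[𝕜] (PathAlg 𝕜 n ⊗[𝕜] PathAlg 𝕜 n) :=
    pv 𝕜 n p j ⊗ₜ[𝕜] (pe 𝕜 n i ⊗ₜ[𝕜] pv 𝕜 n m i) with hT2
  -- the values of the double bracket on the relevant pairs
  have e_bc : S.D.br (pv 𝕜 n m i) (pv 𝕜 n p i)
      = S.α i m p • (pv 𝕜 n p i ⊗ₜ[𝕜] pv 𝕜 n m i) := S.hbr_α m i p hmi hpi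
  have e_a_pi : S.D.br (pv 𝕜 n i j) (pv 𝕜 n p i)
      = -(S.μ i p j • ((pv 𝕜 n p i * pv 𝕜 n i j) ⊗ₜ[𝕜] pe 𝕜 n i))
        - S.ν i p j • (pv 𝕜 n p j ⊗ₜ[𝕜] pe 𝕜 n i) := S.hbr_μν' i j p hij hpi hpj
  have e_ab : S.D.br (pv 𝕜 n i j) (pv 𝕜 n m i)
      = -(S.μ i m j • ((pv 𝕜 n m i * pv 𝕜 n i j) ⊗ₜ[𝕜] pe 𝕜 n i))
        - S.ν i m j • (pv 𝕜 n m j ⊗ₜ[𝕜] pe 𝕜 n i) := S.hbr_μν' i j m hij hmi hmj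
  have e_ca : S.D.br (pv 𝕜 n p i) (pv 𝕜 n i j)
      = S.μ i p j • (pe 𝕜 n i ⊗ₜ[𝕜] (pv 𝕜 n p i * pv 𝕜 n i j))
        + S.ν i p j • (pe 𝕜 n i ⊗ₜ[𝕜] pv 𝕜 n p j) := by
    rw [S.D.cyclic (pv 𝕜 n i j) (pv 𝕜 n p i), e_a_pi]
    simp only [map_sub, map_neg, map_smul, TensorProduct.comm_tmul]
    module
  have e_c_mi : S.D.br (pv 𝕜 n p i) (pv 𝕜 n m i)
      = (- S.α i m p) • (pv 𝕜 n m i ⊗ₜ[𝕜] pv 𝕜 n p i) := by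
    have h0 := S.hbr_α p i m hpi hmi
    rwa [S.hα_skew i p m] at h0
  have e_b_e : S.D.br (pv 𝕜 n m i) (pe 𝕜 n i) = 0 := by
    rw [S.D.cyclic (pe 𝕜 n i) (pv 𝕜 n m i), S.hB i]
    simp only [LinearMap.zero_apply, map_zero, neg_zero]
  have e_c_mj : S.D.br (pv 𝕜 n p i) (pv 𝕜 n m j)
      = (if m = p then S.β m i j else 0) • (pv 𝕜 n m i ⊗ₜ[𝕜] pv 𝕜 n p j) := by
    by_cases hmp : m = p
    · subst hmp
      rw [if_pos rfl]
      exact S.hbr_β m i j him hjm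
    · rw [if_neg hmp, zero_smul]
      exact S.hdisj p i m j (fun h => hmp h.symm) hpj him hij
  have e_c_mij : S.D.br (pv 𝕜 n p i) (pv 𝕜 n m i * pv 𝕜 n i j)
      = (S.μ i p j - S.α i m p) • (pv 𝕜 n m i ⊗ₜ[𝕜] (pv 𝕜 n p i * pv 𝕜 n i j))
        + S.ν i p j • (pv 𝕜 n m i ⊗ₜ[𝕜] pv 𝕜 n p j) := by
    rw [S.D.leibniz, e_c_mi, e_ca]
    have hmul : pv 𝕜 n m i * pe 𝕜 n i = pv 𝕜 n m i := by rw [pv_mul_pe, if_pos rfl]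
    simp only [smul_mul_assoc, mul_smul_comm, Algebra.TensorProduct.tmul_mul_tmul,
      mul_add, add_mul, mul_one, one_mul, hmul]
    module
  -- the left-hand side
  have hL : tripleBr S.D (pv 𝕜 n i j) (pv 𝕜 n m i) (pv 𝕜 n p i)
      = (S.α i m p * S.μ i m j - S.α i m p * S.μ i p j - S.μ i p j * S.μ i m j) • T1
        + (-(S.ν i p j * (S.α i m p + S.μ i m j))
            - (if m = p then S.β m i j else 0) * S.ν i m j) • T2 := by
    rw [tripleBr, e_bc, e_ca, e_ab]
    simp only [map_add, map_sub, map_neg, map_smul, extL_tmul, e_a_pi, e_b_e, e_c_mij,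
      e_c_mj, smul_sub, smul_add, smul_zero, TensorProduct.sub_tmul, TensorProduct.neg_tmul,
      TensorProduct.add_tmul, map_zero, TensorProduct.zero_tmul, TensorProduct.tmul_zero,
      LinearMap.zero_apply, ← TensorProduct.smul_tmul', TensorProduct.tmul_smul,
      TensorProduct.assoc_tmul, tau132_tmul, tau123_tmul, hT1, hT2]
    module
  -- the right-hand side
  have hR : tripleQP (pe 𝕜 n) (pv 𝕜 n i j) (pv 𝕜 n m i) (pv 𝕜 n p i)
      = (-(4 : 𝕜)⁻¹) • T1 := by
    rw [tripleQP]
    rw [Fintype.sum_eq_single i ?_]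
    · simp only [pv_mul_pe, pe_mul_pv, pe_mul_pe, if_pos rfl, hij, him, hip,
        ite_mul, mul_ite, zero_mul, mul_zero, if_neg, if_true, if_false,
        pv_mul_pv i j m i hjm, pv_mul_pv m i p i hip]
      simp only [TensorProduct.tmul_zero, TensorProduct.zero_tmul, sub_zero, zero_sub,
        add_zero, zero_add, neg_neg, smul_neg, hT1]
      module
    · intro s hs
      simp only [pv_mul_pe, pe_mul_pv, pe_mul_pe, ite_mul, mul_ite, zero_mul, mul_zero,
        hs, pv_mul_pv i j m i hjm, pv_mul_pv m i p i hip, if_false,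
        TensorProduct.tmul_zero, TensorProduct.zero_tmul]
      simp [hs]
  rw [hL, hR]
  -- extract the scalars via linear functionals
  constructor
  · intro h
    have h1 := congrArg
      (triFun (entryCoeff 𝕜 n p j (Finsupp.single (p, i) 1 + Finsupp.single (i, j) 1))
        (entryCoeff 𝕜 n i i 0) (entryCoeff 𝕜 n m i (Finsupp.single (m, i) 1))) h
    have h2 := congrArg
      (triFun (entryCoeff 𝕜 n p j (Finsupp.single (p, j) 1))
        (entryCoeff 𝕜 n i i 0) (entryCoeff 𝕜 n m i (Finsupp.single (m, i) 1))) h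
    simp only [map_add, map_smul, map_neg, hT1, hT2, triFun_tmul,
      ec_T1_a hpi hij, ec_T2_a hpi hpj, ec_T1_b hpi hij, ec_T2_b hpj,
      ec_pe_one, ec_pv_one hmi, smul_eq_mul, mul_one, one_mul, mul_zero, zero_mul]
      at h1 h2
    constructor
    · by_cases hmp : m = p
      · rw [if_pos hmp] at h2 ⊢
        rw [show S.ν i m j = S.ν i p j from by rw [hmp]] at h2
        linear_combination -h2
      · rw [if_neg hmp] at h2 ⊢
        linear_combination -h2
    · linear_combination h1
  · rintro ⟨h1, h2⟩
    have hc2 : (-(S.ν i p j * (S.α i m p + S.μ i m j))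
        - (if m = p then S.β m i j else 0) * S.ν i m j) = 0 := by
      by_cases hmp : m = p
      · rw [if_pos hmp] at h1 ⊢
        rw [show S.ν i m j = S.ν i p j from by rw [hmp]]
        linear_combination -h1
      · rw [if_neg hmp] at h1 ⊢
        linear_combination -h1
    rw [hc2, zero_smul, add_zero, show (S.α i m p * S.μ i m j - S.α i m p * S.μ i p j
      - S.μ i p j * S.μ i m j) = -(4 : 𝕜)⁻¹ from h2]

end NCQP
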